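/- In any MV-algebra, the family of axioms {2x² = (2x)², the Boolean condition 2(2x)² = (2x)², and the implication (x⊕x = x ⟹ x = 0 ∨ x = 1)} is equivalent to the family {2x² = (2x)², and the disjunction (x ≤ ¬x ∨ ¬x ≤ x) for all x}. -/

import Mathlib

/-- An MV-algebra `(A, ⊕, ¬, 0)`. -/
class MV (A : Type*) where
  op : A → A → A
  neg : A → A
  zero : A
  op_assoc : ∀ x y z : A, op (op x y) z = op x (op y z)
  op_comm : ∀ x y : A, op x y = op y x
  op_zero : ∀ x : A, op x zero = x
  neg_neg : ∀ x : A, neg (neg x) = x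
  op_neg_zero : ∀ x : A, op x (neg zero) = neg zero
  mv6 : ∀ x y : A, op (neg (op (neg x) y)) y = op (neg (op (neg y) x)) x

namespace MV

variable {A : Type*} [MV A]

/-- `1 := ¬0`. -/
def one : A := neg zero

/-- `x ⊙ y := ¬(¬x ⊕ ¬y)`. -/
def odot (x y : A) : A := neg (op (neg x) (neg y))

/-- `sup(x,y) := (x ⊙ ¬y) ⊕ y`. -/
def ssup (x y : A) : A := op (odot x (neg y)) y

/-- `inf(x,y) := (x ⊕ ¬y) ⊙ y`. -/
def sinf (x y : A) : A := odot (op x (neg y)) y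

/-- `x ≤ y` iff `¬x ⊕ y = 1`. -/
def le (x y : A) : Prop := op (neg x) y = one

/-- `x ≤ y` iff `inf(x,y) = x`. -/
def leInf (x y : A) : Prop := sinf x y = x

/-- `n`-fold sum `nx = x ⊕ ⋯ ⊕ x`. -/
def nsm : ℕ → A → A
  | 0, _ => zero
  | n + 1, x => op x (nsm n x)

/-- `x² := x ⊙ x`. -/
def sq (x : A) : A := odot x x

end MV

/-!
`x ≤ ¬x` says `x² = 0` and `¬x ≤ x` says `2x = 1`. Under `2x² = (2x)²`, and since `2a = 0`
forces `a = 0`, these two cases are exactly `(2x)² = 0` and `(2x)² = 1`, the only values allowed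
for the idempotent `(2x)²` when every idempotent is `0` or `1`. Conversely, an idempotent `x`
with `2x = 1` is `1`, and one with `x ≤ ¬x` is `0` by the MV-axiom
`¬(¬x ⊕ y) ⊕ y = ¬(¬y ⊕ x) ⊕ x` at `y = ¬x`.
-/

namespace MV

variable {A : Type*} [MV A]

lemma neg_one_eq_zero : (neg one : A) = zero := MV.neg_neg zero

lemma zero_op (x : A) : op zero x = x := by rw [op_comm]; exact op_zero x

lemma op_one (x : A) : op x one = one := op_neg_zero x

lemma neg_op_self (x : A) : op (neg x) x = one := by
  have h := mv6 x (one : A)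
  rwa [op_one, neg_one_eq_zero, zero_op, eq_comm] at h

lemma neg_eq_zero_iff {a : A} : neg a = zero ↔ a = one := by
  constructor
  · intro h; rw [← MV.neg_neg a, h]; rfl
  · rintro rfl; exact neg_one_eq_zero

lemma neg_eq_one_iff {a : A} : neg a = one ↔ a = zero := by
  rw [← neg_eq_zero_iff, MV.neg_neg]

lemma op_self_eq_zero_iff {a : A} : op a a = zero ↔ a = zero := by
  refine ⟨fun h => ?_, fun h => by rw [h, op_zero]⟩
  have h1 : op (op (neg a) a) a = op (neg a) (op a a) := op_assoc _ _ _
  rw [neg_op_self, h, op_zero, op_comm, op_one] at h1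
  rw [← MV.neg_neg a, ← h1, neg_one_eq_zero]

lemma sq_eq_zero_iff_le_neg {x : A} : sq x = zero ↔ le x (neg x) :=
  neg_eq_zero_iff

lemma neg_le_iff_op_self_eq_one {x : A} : le (neg x) x ↔ op x x = one := by
  rw [le, MV.neg_neg]

lemma sq_eq_one_iff {a : A} : sq a = one ↔ a = one := by
  constructor
  · intro h
    rwa [sq, odot, neg_eq_one_iff, op_self_eq_zero_iff, neg_eq_zero_iff] at h
  · rintro rfl
    rw [sq, odot, neg_one_eq_zero, op_zero]
    rfl

lemma sq_op_self_eq_zero_iff {x : A} (h : op (sq x) (sq x) = sq (op x x)) :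
    sq (op x x) = zero ↔ sq x = zero := by
  rw [← h, op_self_eq_zero_iff]

lemma eq_zero_of_le_neg_of_op_self {x : A} (h : le x (neg x)) (hx : op x x = x) : x = zero := by
  have h6 := mv6 x (neg x)
  rw [h, neg_one_eq_zero, zero_op, MV.neg_neg, hx, neg_op_self] at h6
  exact neg_eq_one_iff.mp h6

end MV

open MV in
/-- The axiom family `{2x² = (2x)², 2(2x)² = (2x)², (x ⊕ x = x → x = 0 ∨ x = 1)}`
is equivalent, in any MV-algebra, to `{2x² = (2x)², (x ≤ ¬x ∨ ¬x ≤ x)}`. -/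
theorem perfect_axiomatizations_equivalent {A : Type*} [MV A] :
    ((∀ x : A, op (sq x) (sq x) = sq (op x x)) ∧
     (∀ x : A, op (sq (op x x)) (sq (op x x)) = sq (op x x)) ∧
     (∀ x : A, op x x = x → x = zero ∨ x = one))
    ↔
    ((∀ x : A, op (sq x) (sq x) = sq (op x x)) ∧
     (∀ x : A, le x (neg x) ∨ le (neg x) x)) := by
  constructor
  · rintro ⟨h1, h2, h3⟩
    refine ⟨h1, fun x => ?_⟩
    rw [← sq_eq_zero_iff_le_neg, neg_le_iff_op_self_eq_one, ← sq_op_self_eq_zero_iff (h1 x),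
      ← MV.sq_eq_one_iff]
    exact h3 _ (h2 x)
  · rintro ⟨h1, ht⟩
    refine ⟨h1, fun x => ?_, fun x hx => ?_⟩
    · rcases ht x with h | h
      · rw [(sq_op_self_eq_zero_iff (h1 x)).mpr (sq_eq_zero_iff_le_neg.mpr h), op_zero]
      · rw [neg_le_iff_op_self_eq_one.mp h, MV.sq_eq_one_iff.mpr rfl, op_one]
    · exact (ht x).imp (eq_zero_of_le_neg_of_op_self · hx)
        (fun h => hx.symm.trans (neg_le_iff_op_self_eq_one.mp h))
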